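/- Let (W, 𝓗, μ) be an abstract Wiener space, i.e., 𝓗 is a separable Hilbert space continuously embedded in the Banach space W. Then for each m ≥ 1 there are bounded inclusions L^{(m)}(W, …, W; ℝ) ↪ L^{(m)}(W, …, W, 𝓗; ℝ) ↪ (𝓗*)^{⊗m}, where the last space carries the Hilbert–Schmidt norm. In particular, any bounded m-multilinear form on W restricts to a Hilbert–Schmidt m-multilinear form on 𝓗. -/

import Mathlib

/-!
Expand a bounded `m`-linear form `T` on `W` in its first slot: for fixed basis indices in the
other `m - 1` slots, `w ↦ T (w, j e_{i₂}, …, j e_{iₘ})` is a functional `φ` on `W`, and by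
Parseval for its representative `h_φ` the squares `φ (j e_a)²` sum to `∫ φ² dμ`. Summing over
the remaining indices inside the integral and applying the bound for `m - 1` pointwise in `w`
gives `∑ᵢ T (j e_{i₁}, …, j e_{iₘ})² ≤ (∫ ‖w‖² dμ)ᵐ ‖T‖²` by induction on `m`.
-/

open MeasureTheory

theorem HasSum.prod_of_nonneg {α β : Type*} {f : α × β → ℝ} (hf : 0 ≤ f) {A : α → ℝ}
    (hA : ∀ x, HasSum (fun y => f (x, y)) (A x)) (hsum : Summable A) :
    HasSum f (∑' x, A x) := by
  have hfib : ∀ x, Summable fun y => f (x, y) := fun x => (hA x).summable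
  have hf_sum : Summable f :=
    (summable_prod_of_nonneg hf).2 ⟨hfib, by simpa only [(hA _).tsum_eq] using hsum⟩
  rw [← tsum_congr fun x => (hA x).tsum_eq, ← hf_sum.tsum_prod' hfib]
  exact hf_sum.hasSum

theorem HilbertBasis.hasSum_sq_inner {ι E : Type*} [NormedAddCommGroup E]
    [InnerProductSpace ℝ E] (e : HilbertBasis ι ℝ E) (h : E) :
    HasSum (fun a => (inner ℝ h (e a) : ℝ) ^ 2) (‖h‖ ^ 2) := by
  simpa only [real_inner_comm h, ← sq, real_inner_self_eq_norm_sq]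
    using e.hasSum_inner_mul_inner h h

section IntegralOfSum

variable {Ω κ : Type*} [MeasurableSpace Ω] {μ : Measure Ω} {f : κ → Ω → ℝ} {G : Ω → ℝ}

theorem sum_integral_le_integral_of_sum_le (hf : ∀ t w, 0 ≤ f t w) (hG : Integrable G μ)
    (s : Finset κ) (hle : ∀ w, ∑ t ∈ s, f t w ≤ G w) :
    ∑ t ∈ s, ∫ w, f t w ∂μ ≤ ∫ w, G w ∂μ := by
  classical
  -- No measurability is assumed: a non-integrable `f t` has integral `0` and is dropped.
  set s' := s.filter fun t => Integrable (f t) μ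
  have hint : ∀ t ∈ s', Integrable (f t) μ := fun t ht => (Finset.mem_filter.1 ht).2
  calc ∑ t ∈ s, ∫ w, f t w ∂μ = ∑ t ∈ s', ∫ w, f t w ∂μ :=
        (Finset.sum_filter_of_ne fun t _ h => by_contra fun hi => h (integral_undef hi)).symm
    _ = ∫ w, ∑ t ∈ s', f t w ∂μ := (integral_finsetSum _ hint).symm
    _ ≤ ∫ w, G w ∂μ := integral_mono (integrable_finsetSum _ hint) hG fun w =>
        (Finset.sum_le_sum_of_subset_of_nonneg (Finset.filter_subset _ _)
          fun t _ _ => hf t w).trans (hle w)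

theorem summable_integral_and_tsum_le (hf : ∀ t w, 0 ≤ f t w) (hG : Integrable G μ)
    (hle : ∀ w, Summable (fun t => f t w) ∧ ∑' t, f t w ≤ G w) :
    Summable (fun t => ∫ w, f t w ∂μ) ∧ ∑' t, ∫ w, f t w ∂μ ≤ ∫ w, G w ∂μ := by
  have hsum : ∀ s : Finset κ, ∑ t ∈ s, ∫ w, f t w ∂μ ≤ ∫ w, G w ∂μ := fun s =>
    sum_integral_le_integral_of_sum_le hf hG s fun w =>
      ((hle w).1.sum_le_tsum s fun t _ => hf t w).trans (hle w).2
  have hnonneg : 0 ≤ fun t => ∫ w, f t w ∂μ := fun t => integral_nonneg (hf t)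
  exact ⟨summable_of_sum_le hnonneg hsum, Real.tsum_le_of_sum_le hnonneg hsum⟩

end IntegralOfSum

namespace ContinuousMultilinearMap

variable {W ι : Type*} [NormedAddCommGroup W] [NormedSpace ℝ W] [MeasurableSpace W]
  (μ : Measure W) {b : ι → W}

theorem hasSum_sq_apply_comp_cons
    (hb : ∀ φ : W →L[ℝ] ℝ, HasSum (fun a => (φ (b a)) ^ 2) (∫ w, (φ w) ^ 2 ∂μ)) {m : ℕ}
    (T : ContinuousMultilinearMap ℝ (fun _ : Fin (m + 1) => W) ℝ) (t : Fin m → ι) :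
    HasSum (fun a => (T (b ∘ Fin.cons a t)) ^ 2) (∫ w, (T.curryLeft w (b ∘ t)) ^ 2 ∂μ) := by
  simpa only [Fin.comp_cons, ContinuousLinearMap.comp_apply, apply_apply, curryLeft_apply]
    using hb ((ContinuousMultilinearMap.apply ℝ _ ℝ (b ∘ t)).comp T.curryLeft)

theorem summable_sq_apply_comp_and_tsum_le (hmom : Integrable (fun w => ‖w‖ ^ 2) μ)
    (hb : ∀ φ : W →L[ℝ] ℝ, HasSum (fun a => (φ (b a)) ^ 2) (∫ w, (φ w) ^ 2 ∂μ)) :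
    ∀ {m : ℕ} (T : ContinuousMultilinearMap ℝ (fun _ : Fin m => W) ℝ),
      Summable (fun i : Fin m → ι => (T (b ∘ i)) ^ 2) ∧
        ∑' i : Fin m → ι, (T (b ∘ i)) ^ 2 ≤ (∫ w, ‖w‖ ^ 2 ∂μ) ^ m * ‖T‖ ^ 2 := by
  intro m
  induction m with
  | zero =>
    intro T
    have hT : ‖T (b ∘ default)‖ ≤ ‖T‖ := by
      simpa only [Finset.univ_eq_empty, Finset.prod_empty, mul_one]
        using T.le_opNorm (b ∘ default)
    refine ⟨(hasSum_unique _).summable, ?_⟩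
    rw [(hasSum_unique _).tsum_eq, pow_zero, one_mul, ← sq_abs, ← Real.norm_eq_abs]
    gcongr
  | succ m ih =>
    intro T
    set M := ∫ w, ‖w‖ ^ 2 ∂μ
    have hrow : ∀ w, Summable (fun t : Fin m → ι => (T.curryLeft w (b ∘ t)) ^ 2) ∧
        ∑' t : Fin m → ι, (T.curryLeft w (b ∘ t)) ^ 2 ≤ M ^ m * ‖T‖ ^ 2 * ‖w‖ ^ 2 := by
      intro w
      obtain ⟨hsum, hle⟩ := ih (T.curryLeft w)
      have hw : ‖T.curryLeft w‖ ≤ ‖T‖ * ‖w‖ := T.curryLeft_norm ▸ T.curryLeft.le_opNorm w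
      refine ⟨hsum, hle.trans ?_⟩
      rw [mul_assoc, ← mul_pow]
      gcongr
    obtain ⟨hcol, hcol_le⟩ :=
      summable_integral_and_tsum_le (fun _ _ => sq_nonneg _) (hmom.const_mul _) hrow
    have hprod : HasSum (fun p : (Fin m → ι) × ι => (T (b ∘ Fin.cons p.2 p.1)) ^ 2) _ :=
      HasSum.prod_of_nonneg (fun _ => sq_nonneg _) (hasSum_sq_apply_comp_cons μ hb T) hcol
    have hall : HasSum (fun i : Fin (m + 1) → ι => (T (b ∘ i)) ^ 2) _ :=
      ((Equiv.prodComm _ _).trans (Fin.consEquiv fun _ => ι)).hasSum_iff.1 hprod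
    refine ⟨hall.summable, hall.tsum_eq ▸ hcol_le.trans_eq ?_⟩
    rw [integral_const_mul]
    ring

end ContinuousMultilinearMap

theorem multilinear_form_restricts_hilbertSchmidt_general
    {W : Type*} [NormedAddCommGroup W] [NormedSpace ℝ W] [MeasurableSpace W]
    {𝓗 : Type*} [NormedAddCommGroup 𝓗] [InnerProductSpace ℝ 𝓗]
    (j : 𝓗 →L[ℝ] W)
    (μ : Measure W)
    (hmom : Integrable (fun w => ‖w‖ ^ 2) μ)
    (hgauss : ∀ φ : W →L[ℝ] ℝ, ∃ hφ : 𝓗,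
      (∀ k : 𝓗, (inner ℝ hφ k : ℝ) = φ (j k)) ∧ ∫ w, (φ w) ^ 2 ∂μ = ‖hφ‖ ^ 2)
    (m : ℕ)
    {ι : Type*} (e : HilbertBasis ι ℝ 𝓗) :
    ∃ C : ℝ, 0 ≤ C ∧
      ∀ T : ContinuousMultilinearMap ℝ (fun _ : Fin m => W) ℝ,
        Summable (fun i : Fin m → ι => (T (fun k => j (e (i k)))) ^ 2) ∧
        (∑' i : Fin m → ι, (T (fun k => j (e (i k)))) ^ 2) ≤ C * ‖T‖ ^ 2 := by
  have hb : ∀ φ : W →L[ℝ] ℝ, HasSum (fun a => (φ (j (e a))) ^ 2) (∫ w, (φ w) ^ 2 ∂μ) := by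
    intro φ
    obtain ⟨h, hrep, hint⟩ := hgauss φ
    simpa only [hrep, hint] using e.hasSum_sq_inner h
  exact ⟨(∫ w, ‖w‖ ^ 2 ∂μ) ^ m, pow_nonneg (integral_nonneg fun _ => sq_nonneg _) m,
    ContinuousMultilinearMap.summable_sq_apply_comp_and_tsum_le μ hmom hb⟩

/-- Kuo's theorem for an abstract Wiener space `(W, 𝓗, μ)`: every bounded `m`-multilinear
form on `W` restricts, along the embedding `j : 𝓗 ↪ W`, to a Hilbert–Schmidt `m`-multilinear
form on `𝓗`, and the inclusion is bounded.  The Wiener-space structure is encoded by a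
probability measure `μ` on `W` with finite second moment such that every `φ ∈ W*` is
represented on `𝓗` (via `j`) by an element `h_φ ∈ 𝓗` with `∫ φ(w)² dμ = ‖h_φ‖²`. -/
theorem multilinear_form_restricts_hilbertSchmidt
    {W : Type*} [NormedAddCommGroup W] [NormedSpace ℝ W] [MeasurableSpace W]
    {𝓗 : Type*} [NormedAddCommGroup 𝓗] [InnerProductSpace ℝ 𝓗]
    (j : 𝓗 →L[ℝ] W) (hj : Function.Injective j)
    (μ : Measure W) [IsProbabilityMeasure μ]
    (hmom : Integrable (fun w => ‖w‖ ^ 2) μ)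
    (hgauss : ∀ φ : W →L[ℝ] ℝ, ∃ hφ : 𝓗,
      (∀ k : 𝓗, (inner ℝ hφ k : ℝ) = φ (j k)) ∧ ∫ w, (φ w) ^ 2 ∂μ = ‖hφ‖ ^ 2)
    (m : ℕ) (hm : 1 ≤ m)
    {ι : Type*} (e : HilbertBasis ι ℝ 𝓗) :
    ∃ C : ℝ, 0 ≤ C ∧
      ∀ T : ContinuousMultilinearMap ℝ (fun _ : Fin m => W) ℝ,
        Summable (fun i : Fin m → ι => (T (fun k => j (e (i k)))) ^ 2) ∧
        (∑' i : Fin m → ι, (T (fun k => j (e (i k)))) ^ 2) ≤ C * ‖T‖ ^ 2 :=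
  multilinear_form_restricts_hilbertSchmidt_general j μ hmom hgauss m e
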